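/- Let Π be a convex set of stochastic policies, ν a probability distribution on states, and ε ≥ 0. Assume Π contains all deterministic policies and that π ∈ Π is an ε-local optimum of J_ν over Π, i.e., for all π'' ∈ Π, lim_{α→0}(J_ν((1-α)π+απ'') - J_ν(π))/α ≤ ε. Then for EVERY stochastic policy π' (not only the optimal one) and every probability distribution μ on states, μ·v_{π'} ≤ μ·v_π + (1-γ)^{-1} · ‖d_{μ,π'}/ν‖_∞ · (E_ν(Π)/(1-γ) + ε), where ‖d_{μ,π'}/ν‖_∞ is the smallest C with d_{μ,π'}(s) ≤ C ν(s) for all s (assumed finite) and E_ν(Π) = max_{ρ∈Π} min_{ρ'∈Π} d_{ν,ρ}·(T v_ρ - T_{ρ'} v_ρ). -/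

import Mathlib

/-!
By the performance difference lemma,
`μ·v_{π'} - μ·v_π = (1-γ)⁻¹ d_{μ,π'}·(T_{π'} v_π - v_π) ≤ (1-γ)⁻¹ d_{μ,π'}·(T v_π - v_π)`.
The gap `T v_π - v_π` is nonnegative, so `d_{μ,π'} ≤ C ν ≤ C (1-γ)⁻¹ d_{ν,π}` transfers the bound
to `d_{ν,π}·(T v_π - v_π)`. Since `(1-γ)⁻¹ d_{ν,π}·(T_σ v_π - v_π)` is the directional derivative
of `J_ν` at `π` towards `σ`, local optimality bounds it by `ε` for every `σ ∈ Π`, whence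
`d_{ν,π}·(T v_π - v_π) ≤ inf_{σ ∈ Π} d_{ν,π}·(T v_π - T_σ v_π) + (1-γ) ε ≤ E_ν(Π) + (1-γ) ε`.
-/

open Matrix Filter Topology

section MDPdefs

variable {S A : Type*}

/-- `P` is a transition kernel: nonnegative and each row sums to one. -/
def IsKernel [Fintype S] (P : S → A → S → ℝ) : Prop :=
  ∀ s a, (∀ s', 0 ≤ P s a s') ∧ ∑ s', P s a s' = 1

/-- A stochastic policy: a probability distribution over actions in each state. -/
def IsPolicy [Fintype A] (π : S → A → ℝ) : Prop :=
  ∀ s, (∀ a, 0 ≤ π s a) ∧ ∑ a, π s a = 1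

/-- A probability distribution over states. -/
def IsDist [Fintype S] (μ : S → ℝ) : Prop :=
  (∀ s, 0 ≤ μ s) ∧ ∑ s, μ s = 1

/-- The reward vector `r_π(s) = ∑_a π(a|s) r(s,a)`. -/
def rPol [Fintype A] (r : S → A → ℝ) (π : S → A → ℝ) : S → ℝ :=
  fun s => ∑ a, π s a * r s a

/-- The stochastic matrix `P_π(s,s') = ∑_a π(a|s) P(s'|s,a)`. -/
def PPol [Fintype A] (P : S → A → S → ℝ) (π : S → A → ℝ) : Matrix S S ℝ :=
  Matrix.of fun s s' => ∑ a, π s a * P s a s'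

/-- The Bellman operator `T_π v = r_π + γ P_π v`. -/
noncomputable def bellman [Fintype S] [Fintype A] (P : S → A → S → ℝ) (r : S → A → ℝ)
    (γ : ℝ) (π : S → A → ℝ) (v : S → ℝ) : S → ℝ :=
  rPol r π + γ • (PPol P π *ᵥ v)

/-- The optimal Bellman operator `(Tv)(s) = max_a [r(s,a) + γ ∑_{s'} P(s'|s,a) v(s')]`. -/
noncomputable def optBellman [Fintype S] [Fintype A] [Nonempty A] (P : S → A → S → ℝ)
    (r : S → A → ℝ) (γ : ℝ) (v : S → ℝ) : S → ℝ :=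
  fun s => Finset.univ.sup' Finset.univ_nonempty fun a => r s a + γ * ∑ s', P s a s' * v s'

/-- The value function of policy `π`, `v_π = (I - γ P_π)⁻¹ r_π`, the unique solution of
`v = r_π + γ P_π v` when `0 ≤ γ < 1`. -/
noncomputable def valueFn [Fintype S] [Fintype A] [DecidableEq S] (P : S → A → S → ℝ)
    (r : S → A → ℝ) (γ : ℝ) (π : S → A → ℝ) : S → ℝ :=
  ((1 : Matrix S S ℝ) - γ • PPol P π)⁻¹ *ᵥ rPol r π

/-- The γ-weighted occupancy measure `d_{μ,π} = (1-γ) μ (I - γ P_π)⁻¹` (a row vector). -/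
noncomputable def occ [Fintype S] [Fintype A] [DecidableEq S] (P : S → A → S → ℝ)
    (γ : ℝ) (μ : S → ℝ) (π : S → A → ℝ) : S → ℝ :=
  (1 - γ) • (μ ᵥ* ((1 : Matrix S S ℝ) - γ • PPol P π)⁻¹)

/-- The stochastic mixture `(1-α)π + απ'`. -/
def mix (α : ℝ) (π π' : S → A → ℝ) : S → A → ℝ :=
  fun s a => (1 - α) * π s a + α * π' s a

/-- The `ν`-greedy-complexity `E_ν(Π) = sup_{ρ∈Π} inf_{ρ'∈Π} d_{ν,ρ}·(T v_ρ - T_{ρ'} v_ρ)`. -/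
noncomputable def greedyCplx [Fintype S] [Fintype A] [Nonempty A] [DecidableEq S]
    (P : S → A → S → ℝ) (r : S → A → ℝ) (γ : ℝ) (ν : S → ℝ)
    (Pol : Set (S → A → ℝ)) : ℝ :=
  ⨆ ρ : Pol, ⨅ ρ' : Pol,
    occ P γ ν (ρ : S → A → ℝ) ⬝ᵥ
      (optBellman P r γ (valueFn P r γ (ρ : S → A → ℝ)) -
        bellman P r γ (ρ' : S → A → ℝ) (valueFn P r γ (ρ : S → A → ℝ)))

/-- `π` is an `ε`-local optimum of `J_ν` over `Pol`: for every `π' ∈ Pol`, the (one-sided)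
limit of `(ν·v_{(1-α)π+απ'} - ν·v_π)/α` as `α → 0⁺` exists and is at most `ε`. -/
def IsLocalOpt [Fintype S] [Fintype A] [DecidableEq S]
    (P : S → A → S → ℝ) (r : S → A → ℝ) (γ : ℝ) (ν : S → ℝ)
    (Pol : Set (S → A → ℝ)) (π : S → A → ℝ) (ε : ℝ) : Prop :=
  ∀ π' ∈ Pol, ∃ L ≤ ε,
    Tendsto (fun α : ℝ =>
        (ν ⬝ᵥ valueFn P r γ (mix α π π') - ν ⬝ᵥ valueFn P r γ π) / α)
      (𝓝[>] 0) (𝓝 L)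

end MDPdefs

section WeightedAverage

variable {ι : Type*} [Fintype ι] {p x : ι → ℝ} {c : ℝ}

lemma dotProduct_le_of_forall_le (hp : ∀ i, 0 ≤ p i) (hp1 : ∑ i, p i = 1)
    (hx : ∀ i, x i ≤ c) : p ⬝ᵥ x ≤ c :=
  calc p ⬝ᵥ x ≤ ∑ i, p i * c := Finset.sum_le_sum fun i _ => mul_le_mul_of_nonneg_left (hx i) (hp i)
    _ = c := by rw [← Finset.sum_mul, hp1, one_mul]

lemma le_dotProduct_of_forall_le (hp : ∀ i, 0 ≤ p i) (hp1 : ∑ i, p i = 1)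
    (hx : ∀ i, c ≤ x i) : c ≤ p ⬝ᵥ x := by
  have := dotProduct_le_of_forall_le hp hp1 (x := -x) (c := -c) fun i => neg_le_neg (hx i)
  rw [dotProduct_neg] at this
  linarith

lemma abs_dotProduct_le_of_forall_abs_le (hp : ∀ i, 0 ≤ p i) (hp1 : ∑ i, p i = 1)
    (hx : ∀ i, |x i| ≤ c) : |p ⬝ᵥ x| ≤ c :=
  abs_le.2 ⟨le_dotProduct_of_forall_le hp hp1 fun i => (abs_le.1 (hx i)).1,
    dotProduct_le_of_forall_le hp hp1 fun i => (abs_le.1 (hx i)).2⟩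

lemma dotProduct_le_mul_dotProduct {d e w : ι → ℝ} (hw : ∀ i, 0 ≤ w i)
    (hde : ∀ i, d i ≤ c * e i) : d ⬝ᵥ w ≤ c * (e ⬝ᵥ w) := by
  rw [← smul_eq_mul, ← smul_dotProduct]
  exact dotProduct_le_dotProduct_of_nonneg_right hde hw

lemma IsDist.nonneg_of_forall_le_mul {d ν : ι → ℝ} (hν : IsDist ν) (hd : ∀ i, 0 ≤ d i)
    (hdν : ∀ i, d i ≤ c * ν i) : 0 ≤ c :=
  calc 0 ≤ ∑ i, d i := Finset.sum_nonneg fun i _ => hd i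
    _ ≤ ∑ i, c * ν i := Finset.sum_le_sum fun i _ => hdν i
    _ = c := by rw [← Finset.mul_sum, hν.2, mul_one]

end WeightedAverage

section Resolvent

variable {n : Type*} [Fintype n] [DecidableEq n] {B : Matrix n n ℝ} {γ : ℝ}

lemma one_sub_smul_mulVec_apply (y : n → ℝ) (i : n) :
    ((1 - γ • B) *ᵥ y) i = y i - γ * (B *ᵥ y) i := by
  simp [sub_mulVec, smul_mulVec]

/-- Minimum principle: at a minimum of `y`, averaging by `B` can only increase `y`. -/
lemma nonneg_of_one_sub_smul_mulVec_nonneg (hB : B ∈ rowStochastic ℝ n) (hγ0 : 0 ≤ γ)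
    (hγ1 : γ < 1) {y : n → ℝ} (hy : ∀ i, 0 ≤ ((1 - γ • B) *ᵥ y) i) (i : n) : 0 ≤ y i := by
  obtain ⟨i₀, -, hmin⟩ := Finset.exists_min_image Finset.univ y ⟨i, Finset.mem_univ i⟩
  have hBy : y i₀ ≤ (B *ᵥ y) i₀ :=
    le_dotProduct_of_forall_le (fun j => nonneg_of_mem_rowStochastic hB)
      (sum_row_of_mem_rowStochastic hB i₀) fun j => hmin j (Finset.mem_univ j)
  have h₀ := hy i₀
  rw [one_sub_smul_mulVec_apply] at h₀
  have : 0 ≤ y i₀ := by nlinarith [mul_le_mul_of_nonneg_left hBy hγ0]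
  exact this.trans (hmin i (Finset.mem_univ i))

lemma isUnit_det_one_sub_smul (hB : B ∈ rowStochastic ℝ n) (hγ0 : 0 ≤ γ) (hγ1 : γ < 1) :
    IsUnit (1 - γ • B).det := by
  rw [isUnit_iff_ne_zero]
  intro hdet
  obtain ⟨v, hv0, hv⟩ := exists_mulVec_eq_zero_iff.2 hdet
  refine hv0 (funext fun i => le_antisymm ?_ ?_)
  · have := nonneg_of_one_sub_smul_mulVec_nonneg hB hγ0 hγ1 (y := -v)
      (by rw [mulVec_neg, hv]; simp) i
    simpa using this
  · exact nonneg_of_one_sub_smul_mulVec_nonneg hB hγ0 hγ1 (by simp [hv]) i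

lemma one_sub_smul_mulVec_inv_mulVec (hB : B ∈ rowStochastic ℝ n) (hγ0 : 0 ≤ γ) (hγ1 : γ < 1)
    (x : n → ℝ) : (1 - γ • B) *ᵥ ((1 - γ • B)⁻¹ *ᵥ x) = x := by
  rw [mulVec_mulVec, mul_nonsing_inv _ (isUnit_det_one_sub_smul hB hγ0 hγ1), one_mulVec]

lemma inv_one_sub_smul_mulVec_eq (hB : B ∈ rowStochastic ℝ n) (hγ0 : 0 ≤ γ) (hγ1 : γ < 1)
    {x y : n → ℝ} (h : (1 - γ • B) *ᵥ y = x) : (1 - γ • B)⁻¹ *ᵥ x = y := by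
  rw [← h, mulVec_mulVec, nonsing_inv_mul _ (isUnit_det_one_sub_smul hB hγ0 hγ1), one_mulVec]

lemma inv_one_sub_smul_nonneg (hB : B ∈ rowStochastic ℝ n) (hγ0 : 0 ≤ γ) (hγ1 : γ < 1)
    (i j : n) : 0 ≤ (1 - γ • B)⁻¹ i j := by
  have := nonneg_of_one_sub_smul_mulVec_nonneg hB hγ0 hγ1
    (y := (1 - γ • B)⁻¹ *ᵥ Pi.single j 1) ?_ i
  · simpa [mulVec_single_one] using this
  · intro k
    rw [one_sub_smul_mulVec_inv_mulVec hB hγ0 hγ1]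
    by_cases hk : k = j <;> simp [hk]

lemma inv_one_sub_smul_mulVec_one (hB : B ∈ rowStochastic ℝ n) (hγ0 : 0 ≤ γ) (hγ1 : γ < 1) :
    (1 - γ • B)⁻¹ *ᵥ 1 = (1 - γ)⁻¹ • 1 := by
  refine inv_one_sub_smul_mulVec_eq hB hγ0 hγ1 (funext fun i => ?_)
  rw [one_sub_smul_mulVec_apply, mulVec_smul, one_vecMul_of_mem_rowStochastic hB]
  simp only [Pi.smul_apply, Pi.one_apply, smul_eq_mul]
  field_simp [(sub_pos.2 hγ1).ne']

lemma vecMul_inv_one_sub_smul_nonneg (hB : B ∈ rowStochastic ℝ n) (hγ0 : 0 ≤ γ) (hγ1 : γ < 1)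
    {ν : n → ℝ} (hν : ∀ i, 0 ≤ ν i) (i : n) : 0 ≤ (ν ᵥ* (1 - γ • B)⁻¹) i :=
  Finset.sum_nonneg fun j _ => mul_nonneg (hν j) (inv_one_sub_smul_nonneg hB hγ0 hγ1 j i)

/-- `x = ν (1 - γB)⁻¹` solves `x = ν + γ x B`, and `x B ≥ 0`. -/
lemma le_vecMul_inv_one_sub_smul (hB : B ∈ rowStochastic ℝ n) (hγ0 : 0 ≤ γ) (hγ1 : γ < 1)
    {ν : n → ℝ} (hν : ∀ i, 0 ≤ ν i) (i : n) : ν i ≤ (ν ᵥ* (1 - γ • B)⁻¹) i := by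
  set x := ν ᵥ* (1 - γ • B)⁻¹
  have hx : x ᵥ* (1 - γ • B) = ν := by
    rw [vecMul_vecMul, nonsing_inv_mul _ (isUnit_det_one_sub_smul hB hγ0 hγ1), vecMul_one]
  have hxB := nonneg_vecMul_of_mem_rowStochastic hB
    (vecMul_inv_one_sub_smul_nonneg hB hγ0 hγ1 hν) i
  have hi := congr_fun hx i
  rw [vecMul_sub, vecMul_one, vecMul_smul] at hi
  simp only [Pi.sub_apply, Pi.smul_apply, smul_eq_mul] at hi
  nlinarith

end Resolvent

section MDP

variable {S A : Type*} {P : S → A → S → ℝ} {r : S → A → ℝ} {γ : ℝ} {ρ σ : S → A → ℝ}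

@[simp]
lemma mix_zero (ρ σ : S → A → ℝ) : mix 0 ρ σ = ρ := by
  funext s a
  simp [mix]

variable [Fintype A]

lemma isPolicy_mix (hρ : IsPolicy ρ) (hσ : IsPolicy σ) {α : ℝ} (h0 : 0 ≤ α) (h1 : α ≤ 1) :
    IsPolicy (mix α ρ σ) := fun s =>
  ⟨fun a => add_nonneg (mul_nonneg (sub_nonneg.2 h1) ((hρ s).1 a)) (mul_nonneg h0 ((hσ s).1 a)),
    by simp only [mix, Finset.sum_add_distrib, ← Finset.mul_sum, (hρ s).2, (hσ s).2]; ring⟩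

lemma rPol_mix (α : ℝ) : rPol r (mix α ρ σ) = (1 - α) • rPol r ρ + α • rPol r σ := by
  funext s
  simp [rPol, mix, add_mul, Finset.sum_add_distrib, Finset.mul_sum, mul_assoc]

lemma PPol_mix (α : ℝ) : PPol P (mix α ρ σ) = (1 - α) • PPol P ρ + α • PPol P σ := by
  ext s s'
  simp [PPol, mix, add_mul, Finset.sum_add_distrib, Finset.mul_sum, mul_assoc]

variable [Fintype S]

lemma bellman_mix (α : ℝ) (v : S → ℝ) :
    bellman P r γ (mix α ρ σ) v = (1 - α) • bellman P r γ ρ v + α • bellman P r γ σ v := by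
  simp only [bellman, rPol_mix, PPol_mix, add_mulVec, smul_mulVec]
  module

def qValue (P : S → A → S → ℝ) (r : S → A → ℝ) (γ : ℝ) (v : S → ℝ) (s : S) (a : A) : ℝ :=
  r s a + γ * ∑ s', P s a s' * v s'

lemma bellman_apply (v : S → ℝ) (s : S) :
    bellman P r γ σ v s = σ s ⬝ᵥ qValue P r γ v s := by
  simp only [bellman, rPol, PPol, qValue, dotProduct, mulVec, Pi.add_apply, Pi.smul_apply,
    smul_eq_mul, of_apply, mul_add, Finset.sum_add_distrib, Finset.mul_sum, Finset.sum_mul]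
  rw [Finset.sum_comm]
  congr 1
  exact Finset.sum_congr rfl fun a _ => Finset.sum_congr rfl fun s' _ => by ring

lemma bellman_le_optBellman [Nonempty A] (hσ : IsPolicy σ) (v : S → ℝ) (s : S) :
    bellman P r γ σ v s ≤ optBellman P r γ v s := by
  rw [bellman_apply]
  exact dotProduct_le_of_forall_le (hσ s).1 (hσ s).2 fun a =>
    Finset.le_sup' (qValue P r γ v s) (Finset.mem_univ a)

lemma abs_qValue_le (hP : IsKernel P) (hγ0 : 0 ≤ γ) (v : S → ℝ) (s : S) (a : A) :
    |qValue P r γ v s a| ≤ ‖r‖ + γ * ‖v‖ := by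
  have hr : |r s a| ≤ ‖r‖ := (norm_le_pi_norm (r s) a).trans (norm_le_pi_norm r s)
  have hPv : |P s a ⬝ᵥ v| ≤ ‖v‖ :=
    abs_dotProduct_le_of_forall_abs_le (hP s a).1 (hP s a).2 fun s' => norm_le_pi_norm v s'
  calc |qValue P r γ v s a| ≤ |r s a| + γ * |P s a ⬝ᵥ v| := by
        rw [← abs_of_nonneg hγ0, ← abs_mul, abs_of_nonneg hγ0]
        exact abs_add_le _ _
    _ ≤ ‖r‖ + γ * ‖v‖ := by gcongr

lemma abs_bellman_le (hP : IsKernel P) (hγ0 : 0 ≤ γ) (hσ : IsPolicy σ) (v : S → ℝ) (s : S) :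
    |bellman P r γ σ v s| ≤ ‖r‖ + γ * ‖v‖ := by
  rw [bellman_apply]
  exact abs_dotProduct_le_of_forall_abs_le (hσ s).1 (hσ s).2 (abs_qValue_le hP hγ0 v s)

lemma abs_optBellman_le [Nonempty A] (hP : IsKernel P) (hγ0 : 0 ≤ γ) (v : S → ℝ) (s : S) :
    |optBellman P r γ v s| ≤ ‖r‖ + γ * ‖v‖ := by
  obtain ⟨a⟩ := ‹Nonempty A›
  refine abs_le.2 ⟨?_, Finset.sup'_le _ _ fun a _ => (abs_le.1 (abs_qValue_le hP hγ0 v s a)).2⟩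
  exact (abs_le.1 (abs_qValue_le hP hγ0 v s a)).1.trans
    (Finset.le_sup' (qValue P r γ v s) (Finset.mem_univ a))

variable [DecidableEq S]

lemma PPol_mem_rowStochastic (hP : IsKernel P) (hρ : IsPolicy ρ) :
    PPol P ρ ∈ rowStochastic ℝ S := by
  refine mem_rowStochastic_iff_sum.2 ⟨fun s s' => ?_, fun s => ?_⟩
  · exact Finset.sum_nonneg fun a _ => mul_nonneg ((hρ s).1 a) ((hP s a).1 s')
  · simp only [PPol, of_apply]
    rw [Finset.sum_comm]
    simp [← Finset.mul_sum, (hP s _).2, (hρ s).2]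

lemma mulVec_valueFn (hP : IsKernel P) (hγ0 : 0 ≤ γ) (hγ1 : γ < 1) (hρ : IsPolicy ρ) :
    (1 - γ • PPol P ρ) *ᵥ valueFn P r γ ρ = rPol r ρ :=
  one_sub_smul_mulVec_inv_mulVec (PPol_mem_rowStochastic hP hρ) hγ0 hγ1 _

lemma bellman_valueFn (hP : IsKernel P) (hγ0 : 0 ≤ γ) (hγ1 : γ < 1) (hρ : IsPolicy ρ) :
    bellman P r γ ρ (valueFn P r γ ρ) = valueFn P r γ ρ := by
  have h := mulVec_valueFn (r := r) hP hγ0 hγ1 hρ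
  rw [sub_mulVec, one_mulVec, smul_mulVec] at h
  rw [bellman, ← h]
  abel

lemma norm_valueFn_le (hP : IsKernel P) (hγ0 : 0 ≤ γ) (hγ1 : γ < 1) (hρ : IsPolicy ρ) :
    ‖valueFn P r γ ρ‖ ≤ (1 - γ)⁻¹ * ‖r‖ := by
  have h : ‖valueFn P r γ ρ‖ ≤ ‖r‖ + γ * ‖valueFn P r γ ρ‖ := by
    refine (pi_norm_le_iff_of_nonneg (by positivity)).2 fun s => ?_
    have hs := abs_bellman_le (r := r) hP hγ0 hρ (valueFn P r γ ρ) s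
    rwa [bellman_valueFn hP hγ0 hγ1 hρ] at hs
  rw [le_inv_mul_iff₀ (sub_pos.2 hγ1)]
  linarith

lemma occ_nonneg (hP : IsKernel P) (hγ0 : 0 ≤ γ) (hγ1 : γ < 1) (hρ : IsPolicy ρ)
    {ν : S → ℝ} (hν : ∀ s, 0 ≤ ν s) (s : S) : 0 ≤ occ P γ ν ρ s :=
  mul_nonneg (sub_nonneg.2 hγ1.le)
    (vecMul_inv_one_sub_smul_nonneg (PPol_mem_rowStochastic hP hρ) hγ0 hγ1 hν s)

lemma sum_occ (hP : IsKernel P) (hγ0 : 0 ≤ γ) (hγ1 : γ < 1) (hρ : IsPolicy ρ)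
    {ν : S → ℝ} (hν : IsDist ν) : ∑ s, occ P γ ν ρ s = 1 := by
  rw [← dotProduct_one, occ, smul_dotProduct, ← dotProduct_mulVec,
    inv_one_sub_smul_mulVec_one (PPol_mem_rowStochastic hP hρ) hγ0 hγ1, dotProduct_smul,
    dotProduct_one, hν.2, smul_eq_mul, smul_eq_mul, mul_one, mul_inv_cancel₀ (sub_pos.2 hγ1).ne']

lemma le_occ (hP : IsKernel P) (hγ0 : 0 ≤ γ) (hγ1 : γ < 1) (hρ : IsPolicy ρ)
    {ν : S → ℝ} (hν : ∀ s, 0 ≤ ν s) (s : S) : ν s ≤ (1 - γ)⁻¹ * occ P γ ν ρ s := by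
  rw [occ, Pi.smul_apply, smul_eq_mul, inv_mul_cancel_left₀ (sub_pos.2 hγ1).ne']
  exact le_vecMul_inv_one_sub_smul (PPol_mem_rowStochastic hP hρ) hγ0 hγ1 hν s

lemma dotProduct_inv_mulVec_eq_occ (hγ1 : γ < 1) (ν w : S → ℝ) :
    ν ⬝ᵥ ((1 - γ • PPol P ρ)⁻¹ *ᵥ w) = (1 - γ)⁻¹ * (occ P γ ν ρ ⬝ᵥ w) := by
  rw [occ, smul_dotProduct, smul_eq_mul, inv_mul_cancel_left₀ (sub_pos.2 hγ1).ne',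
    dotProduct_mulVec]

lemma dotProduct_valueFn_sub_valueFn (hP : IsKernel P) (hγ0 : 0 ≤ γ) (hγ1 : γ < 1)
    (hρ : IsPolicy ρ) (ν : S → ℝ) :
    ν ⬝ᵥ valueFn P r γ ρ - ν ⬝ᵥ valueFn P r γ σ =
      (1 - γ)⁻¹ * (occ P γ ν ρ ⬝ᵥ (bellman P r γ ρ (valueFn P r γ σ) - valueFn P r γ σ)) := by
  have h : (1 - γ • PPol P ρ) *ᵥ (valueFn P r γ ρ - valueFn P r γ σ) =
      bellman P r γ ρ (valueFn P r γ σ) - valueFn P r γ σ := by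
    rw [mulVec_sub, mulVec_valueFn hP hγ0 hγ1 hρ, bellman, sub_mulVec, one_mulVec, smul_mulVec]
    abel
  rw [← dotProduct_sub, ← inv_one_sub_smul_mulVec_eq (PPol_mem_rowStochastic hP hρ) hγ0 hγ1 h,
    dotProduct_inv_mulVec_eq_occ hγ1]

lemma tendsto_occ_mix (hP : IsKernel P) (hγ0 : 0 ≤ γ) (hγ1 : γ < 1) (hρ : IsPolicy ρ)
    (σ : S → A → ℝ) (ν : S → ℝ) :
    Tendsto (fun α : ℝ => occ P γ ν (mix α ρ σ)) (𝓝 0) (𝓝 (occ P γ ν ρ)) := by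
  have hM : Continuous fun α : ℝ => 1 - γ • ((1 - α) • PPol P ρ + α • PPol P σ) := by
    fun_prop
  have hdet : (1 - γ • PPol P ρ).det ≠ 0 :=
    (isUnit_det_one_sub_smul (PPol_mem_rowStochastic hP hρ) hγ0 hγ1).ne_zero
  have hinv : ContinuousAt Inv.inv (1 - γ • PPol P ρ) := by
    refine continuousAt_matrix_inv _ ?_
    rw [Ring.inverse_eq_inv']
    exact continuousAt_inv₀ hdet
  have hocc : Continuous fun M : Matrix S S ℝ => (1 - γ) • (ν ᵥ* M) := by fun_prop
  have h := (hocc.continuousAt.comp (hinv.comp_of_eq (hM.continuousAt (x := 0)) (by simp))).tendsto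
  simp only [Function.comp_def, ← PPol_mix, mix_zero] at h
  exact h

lemma tendsto_slope_valueFn_mix (hP : IsKernel P) (hγ0 : 0 ≤ γ) (hγ1 : γ < 1)
    (hρ : IsPolicy ρ) (hσ : IsPolicy σ) (ν : S → ℝ) :
    Tendsto (fun α : ℝ => (ν ⬝ᵥ valueFn P r γ (mix α ρ σ) - ν ⬝ᵥ valueFn P r γ ρ) / α)
      (𝓝[>] 0)
      (𝓝 ((1 - γ)⁻¹ *
        (occ P γ ν ρ ⬝ᵥ (bellman P r γ σ (valueFn P r γ ρ) - valueFn P r γ ρ)))) := by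
  set v := valueFn P r γ ρ
  set w := bellman P r γ σ v - v
  have hslope : ∀ α ∈ Set.Ioc (0 : ℝ) 1,
      (1 - γ)⁻¹ * (occ P γ ν (mix α ρ σ) ⬝ᵥ w) =
        (ν ⬝ᵥ valueFn P r γ (mix α ρ σ) - ν ⬝ᵥ v) / α := by
    intro α ⟨hα0, hα1⟩
    have hmix : bellman P r γ (mix α ρ σ) v - v = α • w := by
      rw [bellman_mix, bellman_valueFn hP hγ0 hγ1 hρ]
      module
    rw [dotProduct_valueFn_sub_valueFn hP hγ0 hγ1 (isPolicy_mix hρ hσ hα0.le hα1), hmix,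
      dotProduct_smul, smul_eq_mul]
    field_simp
  have hocc := ((continuous_id.dotProduct (continuous_const (y := w))).tendsto _).comp
    (tendsto_occ_mix hP hγ0 hγ1 hρ σ ν)
  refine Tendsto.congr' ?_ ((hocc.const_mul (1 - γ)⁻¹).mono_left nhdsWithin_le_nhds)
  filter_upwards [Ioc_mem_nhdsGT zero_lt_one] with α hα
  exact hslope α hα

noncomputable def greedyGap [Nonempty A] (P : S → A → S → ℝ) (r : S → A → ℝ) (γ : ℝ)
    (ν : S → ℝ) (ρ σ : S → A → ℝ) : ℝ :=
  occ P γ ν ρ ⬝ᵥ (optBellman P r γ (valueFn P r γ ρ) - bellman P r γ σ (valueFn P r γ ρ))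

variable {ν : S → ℝ} {Pol : Set (S → A → ℝ)} {π : S → A → ℝ} {ε : ℝ}

lemma IsLocalOpt.occ_dotProduct_bellman_sub_le (hloc : IsLocalOpt P r γ ν Pol π ε)
    (hP : IsKernel P) (hγ0 : 0 ≤ γ) (hγ1 : γ < 1) (hPol : ∀ ρ ∈ Pol, IsPolicy ρ)
    (hπ : IsPolicy π) (hσ : σ ∈ Pol) :
    occ P γ ν π ⬝ᵥ (bellman P r γ σ (valueFn P r γ π) - valueFn P r γ π) ≤ (1 - γ) * ε := by
  obtain ⟨L, hLε, hL⟩ := hloc σ hσ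
  have hslope := tendsto_nhds_unique (tendsto_slope_valueFn_mix hP hγ0 hγ1 hπ (hPol σ hσ) ν) hL
  exact (inv_mul_le_iff₀ (sub_pos.2 hγ1)).1 (hslope.trans_le hLε)

variable [Nonempty A]

lemma valueFn_le_optBellman (hP : IsKernel P) (hγ0 : 0 ≤ γ) (hγ1 : γ < 1) (hρ : IsPolicy ρ)
    (s : S) : valueFn P r γ ρ s ≤ optBellman P r γ (valueFn P r γ ρ) s := by
  have hs := bellman_le_optBellman (P := P) (r := r) (γ := γ) hρ (valueFn P r γ ρ) s
  rwa [bellman_valueFn hP hγ0 hγ1 hρ] at hs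

lemma greedyGap_nonneg (hP : IsKernel P) (hγ0 : 0 ≤ γ) (hγ1 : γ < 1) (hρ : IsPolicy ρ)
    (hσ : IsPolicy σ) (hν : ∀ s, 0 ≤ ν s) : 0 ≤ greedyGap P r γ ν ρ σ :=
  dotProduct_nonneg_of_nonneg (occ_nonneg hP hγ0 hγ1 hρ hν)
    fun s => sub_nonneg.2 (bellman_le_optBellman hσ _ s)

/-- Only needed to make the `⨆`/`⨅` in `greedyCplx` bounded: a real `iSup` of an unbounded
family is `0`. -/
lemma greedyGap_le (hP : IsKernel P) (hγ0 : 0 ≤ γ) (hγ1 : γ < 1) (hρ : IsPolicy ρ)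
    (hσ : IsPolicy σ) (hν : IsDist ν) :
    greedyGap P r γ ν ρ σ ≤ 2 * (‖r‖ + γ * ((1 - γ)⁻¹ * ‖r‖)) := by
  have hv := norm_valueFn_le (r := r) hP hγ0 hγ1 hρ
  refine dotProduct_le_of_forall_le (occ_nonneg hP hγ0 hγ1 hρ hν.1) (sum_occ hP hγ0 hγ1 hρ hν)
    fun s => ?_
  have h₁ := abs_le.1 (abs_optBellman_le (r := r) hP hγ0 (valueFn P r γ ρ) s)
  have h₂ := abs_le.1 (abs_bellman_le (r := r) hP hγ0 hσ (valueFn P r γ ρ) s)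
  have h₃ : γ * ‖valueFn P r γ ρ‖ ≤ γ * ((1 - γ)⁻¹ * ‖r‖) := by gcongr
  simp only [Pi.sub_apply]
  linarith [h₁.2, h₂.1]

lemma iInf_greedyGap_le_greedyCplx (hP : IsKernel P) (hγ0 : 0 ≤ γ) (hγ1 : γ < 1)
    (hPol : ∀ ρ ∈ Pol, IsPolicy ρ) (hν : IsDist ν) (hπ : π ∈ Pol) :
    ⨅ σ : Pol, greedyGap P r γ ν π σ ≤ greedyCplx P r γ ν Pol := by
  have hbdd (ρ : Pol) : BddBelow (Set.range fun σ : Pol => greedyGap P r γ ν ρ σ) :=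
    ⟨0, by
      rintro _ ⟨σ, rfl⟩
      exact greedyGap_nonneg hP hγ0 hγ1 (hPol _ ρ.2) (hPol _ σ.2) hν.1⟩
  refine le_ciSup (f := fun ρ : Pol => ⨅ σ : Pol, greedyGap P r γ ν ρ σ)
    ⟨2 * (‖r‖ + γ * ((1 - γ)⁻¹ * ‖r‖)), ?_⟩ ⟨π, hπ⟩
  rintro _ ⟨ρ, rfl⟩
  exact (ciInf_le (hbdd ρ) ⟨π, hπ⟩).trans (greedyGap_le hP hγ0 hγ1 (hPol _ ρ.2) (hPol π hπ) hν)

lemma IsLocalOpt.occ_dotProduct_optBellman_sub_le (hloc : IsLocalOpt P r γ ν Pol π ε)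
    (hP : IsKernel P) (hγ0 : 0 ≤ γ) (hγ1 : γ < 1) (hPol : ∀ ρ ∈ Pol, IsPolicy ρ)
    (hν : IsDist ν) (hπ : π ∈ Pol) :
    occ P γ ν π ⬝ᵥ (optBellman P r γ (valueFn P r γ π) - valueFn P r γ π) ≤
      greedyCplx P r γ ν Pol + (1 - γ) * ε := by
  have : Nonempty Pol := ⟨⟨π, hπ⟩⟩
  have hinf : occ P γ ν π ⬝ᵥ (optBellman P r γ (valueFn P r γ π) - valueFn P r γ π) -
      (1 - γ) * ε ≤ ⨅ σ : Pol, greedyGap P r γ ν π σ := by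
    refine le_ciInf fun σ => ?_
    have hσ := hloc.occ_dotProduct_bellman_sub_le hP hγ0 hγ1 hPol (hPol π hπ) σ.2
    have hsplit : greedyGap P r γ ν π σ =
        occ P γ ν π ⬝ᵥ (optBellman P r γ (valueFn P r γ π) - valueFn P r γ π) -
          occ P γ ν π ⬝ᵥ (bellman P r γ σ (valueFn P r γ π) - valueFn P r γ π) := by
      rw [greedyGap, ← dotProduct_sub, sub_sub_sub_cancel_right]
    linarith
  linarith [iInf_greedyGap_le_greedyCplx (r := r) hP hγ0 hγ1 hPol hν hπ]

end MDP

theorem stmt_17_general {S A : Type*} [Fintype S] [Fintype A] [Nonempty A]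
    [DecidableEq S]
    (P : S → A → S → ℝ) (hP : IsKernel P) (r : S → A → ℝ) (γ : ℝ)
    (hγ0 : 0 ≤ γ) (hγ1 : γ < 1)
    (Pol : Set (S → A → ℝ)) (hPol : ∀ ρ ∈ Pol, IsPolicy ρ)
    (ν : S → ℝ) (hν : IsDist ν) (ε : ℝ)
    (π : S → A → ℝ) (hπ : π ∈ Pol)
    (hloc : IsLocalOpt P r γ ν Pol π ε)
    (π' : S → A → ℝ) (hπ' : IsPolicy π') (μ : S → ℝ) (hμ : IsDist μ)
    (C : ℝ) (hC : IsLeast {c : ℝ | ∀ s, occ P γ μ π' s ≤ c * ν s} C) :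
    μ ⬝ᵥ valueFn P r γ π' ≤ μ ⬝ᵥ valueFn P r γ π
      + (1 - γ)⁻¹ * C * (greedyCplx P r γ ν Pol / (1 - γ) + ε) := by
  set v := valueFn P r γ π
  set gap := optBellman P r γ v - v
  have hgap (s : S) : 0 ≤ gap s := sub_nonneg.2 (valueFn_le_optBellman hP hγ0 hγ1 (hPol π hπ) s)
  have hdμ := occ_nonneg hP hγ0 hγ1 hπ' hμ.1
  have hC0 : 0 ≤ C := hν.nonneg_of_forall_le_mul hdμ hC.1
  calc μ ⬝ᵥ valueFn P r γ π'
      = μ ⬝ᵥ v + (1 - γ)⁻¹ * (occ P γ μ π' ⬝ᵥ (bellman P r γ π' v - v)) := by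
        rw [← dotProduct_valueFn_sub_valueFn hP hγ0 hγ1 hπ' μ]
        ring
    _ ≤ μ ⬝ᵥ v + (1 - γ)⁻¹ * (C * (ν ⬝ᵥ gap)) := by
        gcongr
        refine (dotProduct_le_dotProduct_of_nonneg_left (fun s => ?_) hdμ).trans
          (dotProduct_le_mul_dotProduct hgap hC.1)
        exact sub_le_sub_right (bellman_le_optBellman hπ' v s) _
    _ ≤ μ ⬝ᵥ v + (1 - γ)⁻¹ * (C * ((1 - γ)⁻¹ * (occ P γ ν π ⬝ᵥ gap))) := by
        gcongr
        exact dotProduct_le_mul_dotProduct hgap (le_occ hP hγ0 hγ1 (hPol π hπ) hν.1)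
    _ ≤ μ ⬝ᵥ v + (1 - γ)⁻¹ * (C * ((1 - γ)⁻¹ * (greedyCplx P r γ ν Pol + (1 - γ) * ε))) := by
        gcongr
        exact hloc.occ_dotProduct_optBellman_sub_le hP hγ0 hγ1 hPol hν hπ
    _ = μ ⬝ᵥ v + (1 - γ)⁻¹ * C * (greedyCplx P r γ ν Pol / (1 - γ) + ε) := by
        field_simp [(sub_pos.2 hγ1).ne']

/-- if the convex `Π` contains all deterministic policies and `π ∈ Π` is an
`ε`-local optimum of `J_ν`, then for EVERY policy `π'` and distribution `μ`,
`μ·v_{π'} ≤ μ·v_π + (1-γ)⁻¹ ‖d_{μ,π'}/ν‖_∞ (E_ν(Π)/(1-γ) + ε)`. -/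
theorem stmt_17 {S A : Type*} [Fintype S] [Fintype A] [Nonempty S] [Nonempty A]
    [DecidableEq S] [DecidableEq A]
    (P : S → A → S → ℝ) (hP : IsKernel P) (r : S → A → ℝ) (γ : ℝ)
    (hγ0 : 0 ≤ γ) (hγ1 : γ < 1)
    (Pol : Set (S → A → ℝ)) (hPol : ∀ ρ ∈ Pol, IsPolicy ρ)
    (hconv : ∀ ρ ∈ Pol, ∀ ρ' ∈ Pol, ∀ α : ℝ, 0 ≤ α → α ≤ 1 → mix α ρ ρ' ∈ Pol)
    (hdet : ∀ f : S → A, (fun s a => if a = f s then (1 : ℝ) else 0) ∈ Pol)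
    (ν : S → ℝ) (hν : IsDist ν) (ε : ℝ) (hε : 0 ≤ ε)
    (π : S → A → ℝ) (hπ : π ∈ Pol)
    (hloc : IsLocalOpt P r γ ν Pol π ε)
    (π' : S → A → ℝ) (hπ' : IsPolicy π') (μ : S → ℝ) (hμ : IsDist μ)
    (C : ℝ) (hC : IsLeast {c : ℝ | ∀ s, occ P γ μ π' s ≤ c * ν s} C) :
    μ ⬝ᵥ valueFn P r γ π' ≤ μ ⬝ᵥ valueFn P r γ π
      + (1 - γ)⁻¹ * C * (greedyCplx P r γ ν Pol / (1 - γ) + ε) :=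
  stmt_17_general P hP r γ hγ0 hγ1 Pol hPol ν hν ε π hπ hloc π' hπ' μ hμ C hC
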